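/- Let (V,φ) be a topological flow. Then ent*(V,φ) > 0 if, and only if, there exists an open 𝕂-subspace U of V with dim_𝕂(V/U) = 1 such that the φ-cotrajectory C(φ,U) is not open in V (i.e., there exists a non-stationary cocyclic φ-cotrajectory). -/

import Mathlib

open scoped ENNReal

/-- A topological `𝕂`-vector space `V` is *linearly compact* if it is Hausdorff, has a
neighbourhood basis at `0` consisting of open `𝕂`-subspaces, and every family of closed
affine subspaces (cosets of closed `𝕂`-subspaces) with the finite intersection property
has nonempty intersection. -/
def IsLinearlyCompact (𝕂 V : Type*) [Field 𝕂] [AddCommGroup V] [Module 𝕂 V]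
    [TopologicalSpace V] : Prop :=
  T2Space V ∧
  (∀ S ∈ nhds (0 : V), ∃ U : Submodule 𝕂 V, IsOpen (U : Set V) ∧ (U : Set V) ⊆ S) ∧
  ∀ (ι : Type) (N : ι → Submodule 𝕂 V) (v : ι → V),
    (∀ i, IsClosed ((N i : Set V))) →
    (∀ F : Finset ι, (⋂ i ∈ F, ((v i + ·) '' (N i : Set V))).Nonempty) →
    (⋂ i, ((v i + ·) '' (N i : Set V))).Nonempty

/-- A family of proper `𝕂`-subspaces `N i` of `V` is *coindependent* if for every finite
set `F` of indices and every `i ∈ F`, `N i + ⋂_{j ∈ F, j ≠ i} N j = V`. -/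
def Coindependent (𝕂 : Type*) {V ι : Type*} [Field 𝕂] [AddCommGroup V] [Module 𝕂 V]
    (N : ι → Submodule 𝕂 V) : Prop :=
  ∀ (F : Finset ι) (i : ι), i ∈ F → N i ⊔ (⨅ j ∈ F, ⨅ _ : j ≠ i, N j) = ⊤

/-- `Cn φ U n = U ∩ φ⁻¹U ∩ ⋯ ∩ φ⁻⁽ⁿ⁻¹⁾U`. -/
noncomputable def Cn {𝕂 V : Type*} [Field 𝕂] [AddCommGroup V] [Module 𝕂 V]
    (φ : V →ₗ[𝕂] V) (U : Submodule 𝕂 V) (n : ℕ) : Submodule 𝕂 V :=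
  ⨅ k ∈ Finset.range n, Submodule.comap (φ ^ k) U

/-- The `φ`-cotrajectory `C(φ,U) = ⋂_{n ∈ ℕ} φ⁻ⁿU = ⋂_{n ≥ 1} C_n(φ,U)`. -/
noncomputable def Cotraj {𝕂 V : Type*} [Field 𝕂] [AddCommGroup V] [Module 𝕂 V]
    (φ : V →ₗ[𝕂] V) (U : Submodule 𝕂 V) : Submodule 𝕂 V :=
  ⨅ k : ℕ, Submodule.comap (φ ^ k) U

/-- `H*(φ,U) = lim_{n→∞} (1/n)·dim_𝕂 (U / C_n(φ,U))`, realized as a limsup in `ℝ≥0∞`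
(the limit exists, so it coincides with the limsup). -/
noncomputable def HStar {𝕂 V : Type*} [Field 𝕂] [AddCommGroup V] [Module 𝕂 V]
    (φ : V →ₗ[𝕂] V) (U : Submodule 𝕂 V) : ℝ≥0∞ :=
  Filter.atTop.limsup fun n : ℕ =>
    (((Module.rank 𝕂 (↥U ⧸ Submodule.comap U.subtype (Cn φ U n))).toENat : ℕ∞) : ℝ≥0∞) /
      (n : ℝ≥0∞)

/-- The topological entropy `ent*(V,φ) = sup_U H*(φ,U)`, the supremum ranging over all
open `𝕂`-subspaces `U` of `V`. -/
noncomputable def entStar (𝕂 V : Type*) [Field 𝕂] [AddCommGroup V] [Module 𝕂 V]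
    [TopologicalSpace V] (φ : V →ₗ[𝕂] V) : ℝ≥0∞ :=
  ⨆ (U : Submodule 𝕂 V) (_ : IsOpen (U : Set V)), HStar φ U

set_option linter.unusedSectionVars false
set_option linter.unusedVariables false

open Submodule

section Basic
variable {𝕂 V : Type*} [Field 𝕂] [AddCommGroup V] [Module 𝕂 V]

variable (φ : V →ₗ[𝕂] V) (U : Submodule 𝕂 V)

lemma mem_Cn {n : ℕ} {x : V} : x ∈ Cn φ U n ↔ ∀ k < n, (φ ^ k) x ∈ U := by
  simp [Cn, Submodule.mem_iInf]

lemma mem_Cotraj {x : V} : x ∈ Cotraj φ U ↔ ∀ k, (φ ^ k) x ∈ U := by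
  simp [Cotraj, Submodule.mem_iInf]

lemma Cn_one : Cn φ U 1 = U := by
  ext x
  simp [mem_Cn, Nat.lt_one_iff]

lemma Cn_succ (n : ℕ) : Cn φ U (n + 1) = U ⊓ Submodule.comap φ (Cn φ U n) := by
  ext x
  simp only [mem_Cn, Submodule.mem_inf, Submodule.mem_comap]
  constructor
  · intro h
    refine ⟨by simpa using h 0 (Nat.succ_pos n), fun k hk => ?_⟩
    have := h (k + 1) (by omega)
    rwa [pow_succ, Module.End.mul_apply] at this
  · rintro ⟨h0, h⟩ k hk
    match k with
    | 0 => simpa using h0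
    | k + 1 => rw [pow_succ, Module.End.mul_apply]; exact h k (by omega)

lemma Cn_antitone : Antitone (Cn φ U) := by
  intro m n h x hx
  rw [mem_Cn] at hx ⊢
  exact fun k hk => hx k (lt_of_lt_of_le hk h)

lemma Cn_le_U {n : ℕ} (hn : 1 ≤ n) : Cn φ U n ≤ U := by
  intro x hx
  simpa using (mem_Cn φ U).1 hx 0 hn

lemma Cotraj_le_Cn (n : ℕ) : Cotraj φ U ≤ Cn φ U n := by
  intro x hx
  rw [mem_Cn]
  exact fun k _ => (mem_Cotraj φ U).1 hx k

lemma Cn_stab {n : ℕ} (h : Cn φ U (n + 1) = Cn φ U n) :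
    ∀ m, n ≤ m → Cn φ U m = Cn φ U n := by
  intro m hm
  induction m with
  | zero =>
    have h0 : n = 0 := by omega
    subst h0; rfl
  | succ k ih =>
    rcases Nat.lt_or_ge n (k + 1) with h1 | h1
    · have hk : n ≤ k := by omega
      rw [Cn_succ, ih hk, ← Cn_succ, h]
    · have h2 : n = k + 1 := by omega
      rw [h2]

lemma Cotraj_eq_of_stab {n : ℕ} (h : Cn φ U (n + 1) = Cn φ U n) :
    Cotraj φ U = Cn φ U n := by
  refine le_antisymm (Cotraj_le_Cn φ U n) ?_
  intro x hx
  rw [mem_Cotraj]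
  intro k
  have hx' : x ∈ Cn φ U (max n (k + 1)) := by
    rw [Cn_stab φ U h _ (le_max_left _ _)]
    exact hx
  exact (mem_Cn φ U).1 hx' k (by omega)

lemma Cotraj_iInf {ι : Type*} (W : ι → Submodule 𝕂 V) :
    Cotraj φ (⨅ i, W i) = ⨅ i, Cotraj φ (W i) := by
  ext x
  simp only [mem_Cotraj, Submodule.mem_iInf]
  exact ⟨fun h i k => h k i, fun h k i => h i k⟩

end Basic

section Topo
variable {𝕂 V : Type*} [Field 𝕂] [AddCommGroup V] [Module 𝕂 V]
  [TopologicalSpace V] [IsTopologicalAddGroup V]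
variable (φ : V →ₗ[𝕂] V) (U : Submodule 𝕂 V)

lemma continuous_lpow (hφ : Continuous φ) (k : ℕ) : Continuous (φ ^ k) := by
  induction k with
  | zero => simpa [pow_zero, Module.End.coe_one] using continuous_id
  | succ k ih =>
    have : ⇑(φ ^ (k + 1)) = ⇑(φ ^ k) ∘ ⇑φ := by
      ext x; rw [pow_succ, Module.End.mul_apply]; rfl
    rw [this]
    exact ih.comp hφ

lemma isOpen_Cn (hφ : Continuous φ) (hU : IsOpen (U : Set V)) (n : ℕ) :
    IsOpen ((Cn φ U n : Set V)) := by
  have : (Cn φ U n : Set V) = ⋂ k ∈ Finset.range n, (φ ^ k) ⁻¹' (U : Set V) := by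
    ext x
    simp [mem_Cn, Finset.mem_range]
  rw [this]
  exact isOpen_biInter_finset fun k _ => hU.preimage (continuous_lpow φ hφ k)

lemma isClosed_of_isOpen_submodule {W : Submodule 𝕂 V} (hW : IsOpen (W : Set V)) :
    IsClosed (W : Set V) :=
  AddSubgroup.isClosed_of_isOpen W.toAddSubgroup hW

end Topo

set_option linter.unusedSectionVars false

section Rank
variable {𝕂 V : Type*} [Field 𝕂] [AddCommGroup V] [Module 𝕂 V]

open Cardinal

lemma rank_quot_step {A B : Submodule 𝕂 V} (h : A < B) :
    Module.rank 𝕂 (V ⧸ B) + 1 ≤ Module.rank 𝕂 (V ⧸ A) := by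
  have hle : A ≤ B := h.le
  have e := Submodule.quotientQuotientEquivQuotient A B hle
  have hr := Submodule.rank_quotient_add_rank (R := 𝕂) (M := V ⧸ A) (B.map A.mkQ)
  rw [e.rank_eq] at hr
  have hpos : 1 ≤ Module.rank 𝕂 (B.map A.mkQ) := by
    obtain ⟨b, hbB, hbA⟩ := SetLike.exists_of_lt h
    rw [Cardinal.one_le_iff_pos, rank_pos_iff_exists_ne_zero]
    refine ⟨⟨A.mkQ b, Submodule.mem_map_of_mem hbB⟩, ?_⟩
    simp only [ne_eq, Submodule.mk_eq_zero]
    rw [Submodule.mkQ_apply, Submodule.Quotient.mk_eq_zero]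
    exact hbA
  calc Module.rank 𝕂 (V ⧸ B) + 1 ≤ Module.rank 𝕂 (V ⧸ B) + Module.rank 𝕂 (B.map A.mkQ) :=
        add_le_add_right hpos _
    _ = Module.rank 𝕂 (V ⧸ A) := hr

lemma rank_quot_le_of_le {A B : Submodule 𝕂 V} (h : A ≤ B) :
    Module.rank 𝕂 (V ⧸ B) ≤ Module.rank 𝕂 (V ⧸ A) := by
  have hsurj : Function.Surjective (Submodule.mapQ A B LinearMap.id h) := by
    intro y
    obtain ⟨x, rfl⟩ := B.mkQ_surjective y
    exact ⟨A.mkQ x, rfl⟩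
  exact LinearMap.rank_le_of_surjective _ hsurj

/-- `rank (U ⧸ (W ∩ U)) ≤ rank (V ⧸ W)`. -/
lemma rank_quot_comap_subtype_le (U W : Submodule 𝕂 V) :
    Module.rank 𝕂 (↥U ⧸ Submodule.comap U.subtype W) ≤ Module.rank 𝕂 (V ⧸ W) := by
  set f : ↥U →ₗ[𝕂] V ⧸ W := W.mkQ.comp U.subtype
  have hker : Submodule.comap U.subtype W = LinearMap.ker f := by
    ext x
    simp [f, Submodule.Quotient.mk_eq_zero]
  have hinj : Function.Injective ((Submodule.comap U.subtype W).liftQ f hker.le) := by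
    rw [← LinearMap.ker_eq_bot]
    exact Submodule.ker_liftQ_eq_bot _ _ hker.le hker.ge
  exact LinearMap.rank_le_of_injective _ hinj

end Rank

section Limsup
open Filter

lemma limsup_le_of_div {t : ℝ≥0∞} (ht : t ≠ ⊤) {f : ℕ → ℝ≥0∞}
    (hf : ∀ n : ℕ, f n ≤ t / n) : atTop.limsup f = 0 := by
  have h1 : Tendsto (fun n : ℕ => t / n) atTop (nhds 0) := by
    have := ENNReal.Tendsto.const_div (a := t) ENNReal.tendsto_nat_nhds_top (Or.inr ht)
    simpa [ENNReal.div_top] using this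
  have h2 : atTop.limsup (fun n : ℕ => t / n) = 0 := h1.limsup_eq
  refine le_antisymm ?_ zero_le
  calc atTop.limsup f ≤ atTop.limsup (fun n : ℕ => t / n) :=
        limsup_le_limsup (Eventually.of_forall hf)
    _ = 0 := h2

lemma half_le_limsup {f : ℕ → ℝ≥0∞} (hf : ∀ n : ℕ, 2 ≤ n → 1/2 ≤ f n) :
    1/2 ≤ atTop.limsup f := by
  apply le_limsup_of_frequently_le'
  exact ((eventually_atTop.2 ⟨2, hf⟩).frequently)

lemma half_le_div {m : ℕ} (hm : 1 ≤ m) : (1 : ℝ≥0∞)/2 ≤ (m : ℝ≥0∞) / ((m : ℝ≥0∞) + 1) := by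
  have hb0 : ((m : ℝ≥0∞) + 1) ≠ 0 := by simp
  have hbt : ((m : ℝ≥0∞) + 1) ≠ ⊤ := by
    simp [ENNReal.add_ne_top, ENNReal.natCast_ne_top]
  rw [ENNReal.le_div_iff_mul_le (Or.inl hb0) (Or.inl hbt)]
  rw [one_div, ENNReal.inv_mul_le_iff (by norm_num) (by norm_num)]
  calc (m : ℝ≥0∞) + 1 ≤ (m : ℝ≥0∞) + (m : ℝ≥0∞) := by
        gcongr
        exact_mod_cast hm
    _ = 2 * (m : ℝ≥0∞) := by ring

end Limsup

section Chain
variable {𝕂 V : Type*} [Field 𝕂] [AddCommGroup V] [Module 𝕂 V]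
variable (φ : V →ₗ[𝕂] V) (U : Submodule 𝕂 V)

lemma rank_lower (hns : ∀ n, Cn φ U (n + 1) ≠ Cn φ U n) (n : ℕ) :
    (n : Cardinal) ≤ Module.rank 𝕂 (↥U ⧸ Submodule.comap U.subtype (Cn φ U (n + 1))) := by
  induction n with
  | zero => simp
  | succ n ih =>
    have hlt : Cn φ U (n + 2) < Cn φ U (n + 1) :=
      lt_of_le_of_ne (Cn_antitone φ U (by omega)) (hns (n + 1))
    have hcs : Submodule.comap U.subtype (Cn φ U (n + 2)) <
        Submodule.comap U.subtype (Cn φ U (n + 1)) := by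
      refine lt_of_le_of_ne (Submodule.comap_mono hlt.le) fun hEq => ?_
      have h1 := congrArg (Submodule.map U.subtype) hEq
      rw [Submodule.map_comap_subtype, Submodule.map_comap_subtype,
        inf_eq_right.2 (Cn_le_U φ U (by omega)), inf_eq_right.2 (Cn_le_U φ U (by omega))] at h1
      exact hns (n + 1) h1
    calc ((n + 1 : ℕ) : Cardinal) = (n : Cardinal) + 1 := by push_cast; ring
      _ ≤ Module.rank 𝕂 (↥U ⧸ Submodule.comap U.subtype (Cn φ U (n + 1))) + 1 :=
          add_le_add_left ih 1
      _ ≤ Module.rank 𝕂 (↥U ⧸ Submodule.comap U.subtype (Cn φ U (n + 2))) :=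
          rank_quot_step hcs

end Chain

section Pos
variable {𝕂 V : Type*} [Field 𝕂] [AddCommGroup V] [Module 𝕂 V]
  [TopologicalSpace V] [IsTopologicalAddGroup V]

lemma hstar_pos (φ : V →ₗ[𝕂] V) (U : Submodule 𝕂 V) (hφ : Continuous φ)
    (hU : IsOpen (U : Set V)) (hC : ¬ IsOpen ((Cotraj φ U : Set V))) :
    0 < HStar φ U := by
  have hns : ∀ n, Cn φ U (n + 1) ≠ Cn φ U n := by
    intro n h
    exact hC (by rw [Cotraj_eq_of_stab φ U h]; exact isOpen_Cn φ U hφ hU n)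
  have key : ∀ n : ℕ, 2 ≤ n →
      (1 : ℝ≥0∞)/2 ≤
        (((Module.rank 𝕂 (↥U ⧸ Submodule.comap U.subtype (Cn φ U n))).toENat : ℕ∞) : ℝ≥0∞) /
          (n : ℝ≥0∞) := by
    intro n hn
    obtain ⟨m, rfl⟩ : ∃ m, n = m + 1 := ⟨n - 1, by omega⟩
    have hm : 1 ≤ m := by omega
    have h1 : (m : Cardinal) ≤
        Module.rank 𝕂 (↥U ⧸ Submodule.comap U.subtype (Cn φ U (m + 1))) :=
      rank_lower φ U hns m
    have h2 : (m : ℕ∞) ≤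
        (Module.rank 𝕂 (↥U ⧸ Submodule.comap U.subtype (Cn φ U (m + 1)))).toENat := by
      have := Cardinal.enat_gc.monotone_u h1
      rwa [Cardinal.toENat_nat] at this
    have h3 : (m : ℝ≥0∞) ≤
        (((Module.rank 𝕂 (↥U ⧸ Submodule.comap U.subtype (Cn φ U (m + 1)))).toENat : ℕ∞) :
          ℝ≥0∞) := by
      calc (m : ℝ≥0∞) = ((m : ℕ∞) : ℝ≥0∞) := by simp
        _ ≤ _ := ENat.toENNReal_mono h2
    calc (1 : ℝ≥0∞)/2 ≤ (m : ℝ≥0∞) / ((m : ℝ≥0∞) + 1) := half_le_div hm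
      _ ≤ _ := by
          apply ENNReal.div_le_div h3
          push_cast
          rfl
  calc (0 : ℝ≥0∞) < 1/2 := by norm_num
    _ ≤ HStar φ U := half_le_limsup key

end Pos

section Codim
variable {𝕂 V : Type*} [Field 𝕂] [TopologicalSpace 𝕂] [DiscreteTopology 𝕂]
  [AddCommGroup V] [Module 𝕂 V]
  [TopologicalSpace V] [IsTopologicalAddGroup V] [ContinuousSMul 𝕂 V]

lemma rank_quot_lt_aleph0_of_isOpen (hV : IsLinearlyCompact 𝕂 V) {U : Submodule 𝕂 V}
    (hU : IsOpen (U : Set V)) : Module.rank 𝕂 (V ⧸ U) < Cardinal.aleph0 := by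
  classical
  by_contra hinf
  push_neg at hinf
  set b := Module.Basis.ofVectorSpace 𝕂 (V ⧸ U) with hb
  have hinfι : Infinite (Module.Basis.ofVectorSpaceIndex 𝕂 (V ⧸ U)) := by
    rw [Cardinal.infinite_iff, b.mk_eq_rank'']
    exact hinf
  set e := Infinite.natEmbedding (Module.Basis.ofVectorSpaceIndex 𝕂 (V ⧸ U)) with he
  set N : ℕ → Submodule 𝕂 V :=
    fun i => Submodule.comap U.mkQ (LinearMap.ker (b.coord (e i))) with hN
  have hUN : ∀ i, U ≤ N i := by
    intro i x hx
    have : U.mkQ x = 0 := (Submodule.Quotient.mk_eq_zero U).2 hx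
    simp [hN, Submodule.mem_comap, this]
  have hNopen : ∀ i, IsOpen ((N i : Set V)) := fun i => Submodule.isOpen_mono (hUN i) hU
  have hNclosed : ∀ i, IsClosed ((N i : Set V)) :=
    fun i => isClosed_of_isOpen_submodule (hNopen i)
  have hv : ∀ i : ℕ, ∃ x : V, U.mkQ x = b (e i) := fun i => U.mkQ_surjective _
  choose v hvspec using hv
  -- membership criterion
  have hmem : ∀ (i : ℕ) (x : V), x ∈ (v i + ·) '' (N i : Set V) ↔
      b.coord (e i) (U.mkQ x) = 1 := by
    intro i x
    constructor
    · rintro ⟨a, haN, rfl⟩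
      have haN' : b.coord (e i) (U.mkQ a) = 0 := haN
      rw [map_add, map_add, hvspec, haN']
      simp [Module.Basis.coord_apply, Module.Basis.repr_self]
    · intro h
      refine ⟨x - v i, ?_, by simp⟩
      show b.coord (e i) (U.mkQ (x - v i)) = 0
      rw [map_sub, map_sub, hvspec, h]
      simp [Module.Basis.coord_apply, Module.Basis.repr_self]
  -- finite intersection property
  have hFIP : ∀ F : Finset ℕ, (⋂ i ∈ F, ((v i + ·) '' (N i : Set V))).Nonempty := by
    intro F
    refine ⟨∑ j ∈ F, v j, ?_⟩
    rw [Set.mem_iInter₂]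
    intro i hi
    rw [hmem]
    rw [map_sum, map_sum]
    have : ∀ j ∈ F, b.coord (e i) (U.mkQ (v j)) = if j = i then 1 else 0 := by
      intro j _
      rw [hvspec, Module.Basis.coord_apply, Module.Basis.repr_self, Finsupp.single_apply]
      by_cases hji : j = i
      · subst hji; simp
      · rw [if_neg (fun h => hji (e.injective h)), if_neg hji]
    rw [Finset.sum_congr rfl this, Finset.sum_ite_eq' F i (fun _ => (1 : 𝕂)), if_pos hi]
  -- total intersection is empty
  obtain ⟨x, hx⟩ := hV.2.2 ℕ N v hNclosed hFIP
  rw [Set.mem_iInter] at hx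
  have hsupp : ∀ i : ℕ, (e i : Module.Basis.ofVectorSpaceIndex 𝕂 (V ⧸ U)) ∈ (b.repr (U.mkQ x)).support := by
    intro i
    have h1 := (hmem i x).1 (hx i)
    rw [Module.Basis.coord_apply, Submodule.mkQ_apply] at h1
    simp [Finsupp.mem_support_iff, h1]
  have : Finite ℕ := by
    refine Finite.of_injective
      (fun i : ℕ => (⟨e i, hsupp i⟩ : {a // a ∈ (b.repr (U.mkQ x)).support})) ?_
    intro i j hij
    exact e.injective (congrArg Subtype.val hij)
  exact not_finite ℕ

end Codim

section Forward
variable {𝕂 V : Type*} [Field 𝕂] [TopologicalSpace 𝕂] [DiscreteTopology 𝕂]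
  [AddCommGroup V] [Module 𝕂 V]
  [TopologicalSpace V] [IsTopologicalAddGroup V] [ContinuousSMul 𝕂 V]

lemma hstar_zero (hV : IsLinearlyCompact 𝕂 V) (φ : V →ₗ[𝕂] V) (hφ : Continuous φ)
    (hyp : ∀ U' : Submodule 𝕂 V, IsOpen (U' : Set V) → Module.finrank 𝕂 (V ⧸ U') = 1 →
      IsOpen ((Cotraj φ U' : Set V)))
    (U : Submodule 𝕂 V) (hU : IsOpen (U : Set V)) : HStar φ U = 0 := by
  classical
  -- V ⧸ U is finite dimensional
  have hfin : Module.Finite 𝕂 (V ⧸ U) :=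
    Module.rank_lt_aleph0_iff.1 (rank_quot_lt_aleph0_of_isOpen hV hU)
  set c := Module.finBasis 𝕂 (V ⧸ U) with hc
  set m := Module.finrank 𝕂 (V ⧸ U)
  set W : Fin m → Submodule 𝕂 V :=
    fun i => Submodule.comap U.mkQ (LinearMap.ker (c.coord i)) with hW
  have hUW : ∀ i, U ≤ W i := by
    intro i x hx
    have : U.mkQ x = 0 := (Submodule.Quotient.mk_eq_zero U).2 hx
    simp [hW, Submodule.mem_comap, this]
  have hWopen : ∀ i, IsOpen ((W i : Set V)) := fun i => Submodule.isOpen_mono (hUW i) hU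
  -- each W i has codimension 1
  have hWrank : ∀ i, Module.finrank 𝕂 (V ⧸ W i) = 1 := by
    intro i
    have hker : W i = LinearMap.ker ((c.coord i).comp U.mkQ) := by
      rw [LinearMap.ker_comp]
    have hsurj : Function.Surjective ((c.coord i).comp U.mkQ) := by
      intro a
      obtain ⟨y, hy⟩ := U.mkQ_surjective (a • c i)
      refine ⟨y, ?_⟩
      simp [hy, Module.Basis.coord_apply, Module.Basis.repr_self]
    have e := LinearMap.quotKerEquivOfSurjective _ hsurj
    rw [hker]
    rw [e.finrank_eq]
    exact Module.finrank_self 𝕂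
  -- U is the intersection of the W i
  have hWU : (⨅ i, W i) = U := by
    refine le_antisymm ?_ (le_iInf hUW)
    intro x hx
    rw [Submodule.mem_iInf] at hx
    have : U.mkQ x = 0 := by
      have hco : ∀ i, c.repr (U.mkQ x) i = 0 := by
        intro i
        have := hx i
        simpa [hW, Submodule.mem_comap, Module.Basis.coord_apply] using this
      have : c.repr (U.mkQ x) = 0 := by
        ext i; simpa using hco i
      have h0 := congrArg c.repr.symm this
      rwa [LinearEquiv.symm_apply_apply, map_zero] at h0
    rwa [← Submodule.Quotient.mk_eq_zero U, ← Submodule.mkQ_apply]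
  -- Cotraj φ U is open
  have hCopen : IsOpen ((Cotraj φ U : Set V)) := by
    rw [← hWU, Cotraj_iInf, Submodule.coe_iInf]
    exact isOpen_iInter_of_finite fun i => hyp (W i) (hWopen i) (hWrank i)
  -- uniform bound on ranks
  have htlt : Module.rank 𝕂 (V ⧸ Cotraj φ U) < Cardinal.aleph0 :=
    rank_quot_lt_aleph0_of_isOpen hV hCopen
  set t : ℝ≥0∞ := (((Module.rank 𝕂 (V ⧸ Cotraj φ U)).toENat : ℕ∞) : ℝ≥0∞) with ht
  have htne : t ≠ ⊤ := by
    have h1 : (Module.rank 𝕂 (V ⧸ Cotraj φ U)).toENat ≠ ⊤ := by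
      rw [ne_eq, Cardinal.toENat_eq_top]
      exact not_le.2 htlt
    obtain ⟨k, hk⟩ := WithTop.ne_top_iff_exists.1 h1
    rw [ht, ← hk]
    exact ENNReal.natCast_ne_top k
  refine limsup_le_of_div htne fun n => ?_
  have h1 : Module.rank 𝕂 (↥U ⧸ Submodule.comap U.subtype (Cn φ U n)) ≤
      Module.rank 𝕂 (V ⧸ Cotraj φ U) :=
    (rank_quot_comap_subtype_le U (Cn φ U n)).trans
      (rank_quot_le_of_le (Cotraj_le_Cn φ U n))
  have h2 := Cardinal.enat_gc.monotone_u h1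
  have h3 := ENat.toENNReal_mono h2
  exact ENNReal.div_le_div h3 le_rfl

end Forward

theorem stmt_3 {𝕂 V : Type*} [Field 𝕂] [TopologicalSpace 𝕂] [DiscreteTopology 𝕂]
    [AddCommGroup V] [Module 𝕂 V] [TopologicalSpace V] [IsTopologicalAddGroup V]
    [ContinuousSMul 𝕂 V]
    (hV : IsLinearlyCompact 𝕂 V) (φ : V →ₗ[𝕂] V) (hφ : Continuous φ) :
    0 < entStar 𝕂 V φ ↔
      ∃ U : Submodule 𝕂 V, IsOpen (U : Set V) ∧ Module.finrank 𝕂 (V ⧸ U) = 1 ∧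
        ¬ IsOpen ((Cotraj φ U : Set V)) := by
  constructor
  · intro hpos
    by_contra hno
    push_neg at hno
    have hz : entStar 𝕂 V φ = 0 := by
      refine le_antisymm ?_ zero_le
      refine iSup_le fun U => iSup_le fun hU => ?_
      rw [hstar_zero hV φ hφ hno U hU]
    rw [hz] at hpos
    exact lt_irrefl 0 hpos
  · rintro ⟨U, hU, _, hC⟩
    calc (0 : ℝ≥0∞) < HStar φ U := hstar_pos φ U hφ hU hC
      _ ≤ entStar 𝕂 V φ :=
        le_iSup₂ (f := fun (U : Submodule 𝕂 V) (_ : IsOpen ((U : Set V))) => HStar φ U) U hU
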